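/- In an elementwise-filtered based chain complex over a field, every homology class has a unique lexicographically minimal representative cycle: if z is lexicographically minimal and c is a homologous cycle with c ⊑ z, then c = z. -/

import Mathlib

open Classical Finset

noncomputable section

variable {𝕜 : Type} [Field 𝕜] {l : ℕ}

/-- The support of a coordinate vector: the set of basis indices with nonzero coefficient. -/
def vsupp (c : Fin l → 𝕜) : Finset (Fin l) :=
  Finset.univ.filter (fun i => c i ≠ 0)

/-- The pivot of a coordinate vector: the maximal index of its support (`⊥` if zero). -/
def vpivot (c : Fin l → 𝕜) : WithBot (Fin l) := (vsupp c).max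

/-- The lexicographic order on finite subsets of a totally ordered set. -/
def finsetLexLe {α : Type*} [LinearOrder α] (A B : Finset α) : Prop :=
  A = B ∨ ∃ h : ((A \ B) ∪ (B \ A)).Nonempty, ((A \ B) ∪ (B \ A)).max' h ∈ B

/-- The lexicographic preorder on chains, comparing supports lexicographically. -/
def chainLexLe (c₁ c₂ : Fin l → 𝕜) : Prop := finsetLexLe (vsupp c₁) (vsupp c₂)

/-- The strict lexicographic preorder on chains. -/
def chainLexLt (c₁ c₂ : Fin l → 𝕜) : Prop :=
  chainLexLe c₁ c₂ ∧ vsupp c₁ ≠ vsupp c₂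

/-- A basis element is critical if it is contained in no pair of `V`. -/
def CriticalIn {l : ℕ} (V : Finset (Fin l × Fin l)) (a : Fin l) : Prop :=
  ∀ p ∈ V, p.1 ≠ a ∧ p.2 ≠ a

/-- A based chain complex with an elementwise filtration: the basis elements are
`σ_1 < … < σ_l` (indexed by `Fin l`), `deg` records their homological degree, and `D` is the
filtration boundary matrix (the column `D _ j` represents `∂σ_j`).  Monotonicity `filt`
expresses that the down sets of the filtration order span subcomplexes, `homog` that the
boundary map decreases degree by one, and `dd` that `∂ ∘ ∂ = 0`. -/
structure BasedChainComplex (𝕜 : Type) [Field 𝕜] (l : ℕ) where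
  deg : Fin l → ℕ
  D : Matrix (Fin l) (Fin l) 𝕜
  homog : ∀ i j, D i j ≠ 0 → deg i + 1 = deg j
  filt : ∀ i j, D i j ≠ 0 → i < j
  dd : D * D = 0

namespace BasedChainComplex

variable (C : BasedChainComplex 𝕜 l)

/-- `σ_i` is a facet of `σ_j` if `⟨∂σ_j, σ_i⟩ ≠ 0`. -/
def IsFacet (i j : Fin l) : Prop := C.D i j ≠ 0

/-- An algebraic gradient: a disjoint collection `V` of facet pairs arising from an
algebraic Morse function, i.e. a monotonic function `f` on the basis such that a facet
pair `(μ, η)` satisfies `f μ = f η` iff `(μ, η) ∈ V`. -/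
def IsAlgGradient (V : Finset (Fin l × Fin l)) : Prop :=
  (∀ p ∈ V, C.IsFacet p.1 p.2) ∧
  (∀ p ∈ V, ∀ q ∈ V, p ≠ q → p.1 ≠ q.1 ∧ p.1 ≠ q.2 ∧ p.2 ≠ q.1 ∧ p.2 ≠ q.2) ∧
  (∃ f : Fin l → ℝ, (∀ i j, C.IsFacet i j → f i ≤ f j) ∧
    (∀ i j, C.IsFacet i j → (f i = f j ↔ (i, j) ∈ V)))

/-- The chain homotopy `F` of an algebraic gradient `V`: the linear map with
`F σ = −⟨∂τ, σ⟩⁻¹ · τ` if `(σ, τ) ∈ V` and `F σ = 0` otherwise. -/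
def Fmap (V : Finset (Fin l × Fin l)) (c : Fin l → 𝕜) : Fin l → 𝕜 :=
  fun j => ∑ i, (if (i, j) ∈ V then -(C.D i j)⁻¹ else 0) * c i

/-- The flow of an algebraic gradient `V`: `Φ(c) = c + ∂F(c) + F(∂c)`. -/
def flow (V : Finset (Fin l × Fin l)) (c : Fin l → 𝕜) : Fin l → 𝕜 :=
  c + C.D.mulVec (C.Fmap V c) + C.Fmap V (C.D.mulVec c)

/-- A cycle of degree `n`: a chain with `∂z = 0` supported in degree `n`. -/
def IsCycle (n : ℕ) (z : Fin l → 𝕜) : Prop :=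
  C.D.mulVec z = 0 ∧ ∀ i, z i ≠ 0 → C.deg i = n

/-- `V` is `n`-reduced: for every pair `(a, b) ∈ V` with `a` of degree `n`,
the pivot of `∂b` equals `a`. -/
def NReduced (V : Finset (Fin l × Fin l)) (n : ℕ) : Prop :=
  ∀ p ∈ V, C.deg p.1 = n → vpivot (fun i => C.D i p.2) = (p.1 : WithBot (Fin l))

/-- `V` generates the `n`-boundaries: the gradient cofacet boundaries
`{∂b : (a,b) ∈ V, deg a = n}` span the space of boundaries of degree `n`. -/
def GeneratesBoundaries (V : Finset (Fin l × Fin l)) (n : ℕ) : Prop :=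
  ∀ e : Fin l → 𝕜, (∀ i, e i ≠ 0 → C.deg i = n + 1) →
    C.D.mulVec e ∈ Submodule.span 𝕜
      {x : Fin l → 𝕜 | ∃ p ∈ V, C.deg p.1 = n ∧ x = fun i => C.D i p.2}

/-- A chain is lexicographically minimal if no homologous chain is strictly smaller
in the lexicographic preorder. -/
def LexMinimal (z : Fin l → 𝕜) : Prop :=
  ∀ e : Fin l → 𝕜, ¬ chainLexLt (z + C.D.mulVec e) z

end BasedChainComplex

end

/-!
The difference `d = c - z` is a nonzero boundary, and `c`, `z` differ exactly on the support
of `d`; let `m` be its largest index. If `z m = 0`, then `c m ≠ 0` and `m` is the largest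
element of the symmetric difference of the supports, so `c ⊑ z` fails. Otherwise the
homologous chain `z - (z m / d m) • d` agrees with `z` above `m` and vanishes at `m`, so it
is strictly smaller than `z`, contradicting minimality.
-/

theorem finsetLexLe_iff_of_isGreatest {α : Type*} [LinearOrder α] {A B : Finset α} {m : α}
    (hm : IsGreatest (↑(A \ B ∪ B \ A) : Set α) m) : finsetLexLe A B ↔ m ∈ B := by
  have hne : (A \ B ∪ B \ A).Nonempty := ⟨m, hm.1⟩
  have hmax : (A \ B ∪ B \ A).max' hne = m := (isGreatest_max' _ hne).unique hm
  have hAB : A ≠ B := by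
    rintro rfl
    simp at hne
  unfold finsetLexLe
  simp only [hAB, false_or, hmax, exists_prop, and_iff_right hne]

section Chains

variable {𝕜 : Type} [Field 𝕜] {l : ℕ}

theorem mem_vsupp {c : Fin l → 𝕜} {i : Fin l} : i ∈ vsupp c ↔ c i ≠ 0 := by
  simp [vsupp]

theorem isGreatest_symmDiff_vsupp {c₁ c₂ : Fin l → 𝕜} {m : Fin l}
    (hm : IsGreatest {i | c₁ i ≠ c₂ i} m) (hzero : c₁ m = 0 ∨ c₂ m = 0) :
    IsGreatest (↑(vsupp c₁ \ vsupp c₂ ∪ vsupp c₂ \ vsupp c₁) : Set (Fin l)) m := by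
  refine ⟨?_, fun i hi => hm.2 ?_⟩
  · have hm₁ : c₁ m ≠ c₂ m := hm.1
    simp only [coe_union, coe_sdiff, Set.mem_union, Set.mem_sdiff, mem_coe, mem_vsupp]
    rcases hzero with h | h
    · exact Or.inr ⟨fun h' => hm₁ (h.trans h'.symm), not_not.2 h⟩
    · exact Or.inl ⟨fun h' => hm₁ (h'.trans h.symm), not_not.2 h⟩
  · simp only [coe_union, coe_sdiff, Set.mem_union, Set.mem_sdiff, mem_coe,
      mem_vsupp] at hi
    intro h
    rcases hi with hi | hi <;> simp_all

theorem chainLexLe_iff_of_isGreatest {c₁ c₂ : Fin l → 𝕜} {m : Fin l}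
    (hm : IsGreatest {i | c₁ i ≠ c₂ i} m) (hzero : c₁ m = 0 ∨ c₂ m = 0) :
    chainLexLe c₁ c₂ ↔ c₂ m ≠ 0 := by
  rw [chainLexLe, finsetLexLe_iff_of_isGreatest (isGreatest_symmDiff_vsupp hm hzero),
    mem_vsupp]

theorem chainLexLt_of_isGreatest {c₁ c₂ : Fin l → 𝕜} {m : Fin l}
    (hm : IsGreatest {i | c₁ i ≠ c₂ i} m) (h₁ : c₁ m = 0) : chainLexLt c₁ c₂ := by
  have h₂ : c₂ m ≠ 0 := fun h => hm.1 (h₁.trans h.symm)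
  refine ⟨(chainLexLe_iff_of_isGreatest hm (Or.inl h₁)).2 h₂, fun h => ?_⟩
  have hmem : m ∈ vsupp c₂ := mem_vsupp.2 h₂
  rw [← h, mem_vsupp] at hmem
  exact hmem h₁

theorem exists_isGreatest_ne_zero {d : Fin l → 𝕜} (hd : d ≠ 0) :
    ∃ m, IsGreatest {i | d i ≠ 0} m := by
  have hne : (vsupp d).Nonempty := by
    obtain ⟨i, hi⟩ := Function.ne_iff.1 hd
    exact ⟨i, mem_vsupp.2 hi⟩
  have hsupp : {i | d i ≠ 0} = (↑(vsupp d) : Set (Fin l)) := by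
    ext i
    exact mem_vsupp.symm
  exact ⟨_, hsupp ▸ isGreatest_max' _ hne⟩

theorem chainLexLt_add_smul {z d : Fin l → 𝕜} {m : Fin l}
    (hm : IsGreatest {i | d i ≠ 0} m) (hzm : z m ≠ 0) :
    chainLexLt (z + (-z m / d m) • d) z := by
  have hdm : d m ≠ 0 := hm.1
  have hcancel : (z + (-z m / d m) • d) m = 0 := by
    rw [Pi.add_apply, Pi.smul_apply, smul_eq_mul, div_mul_cancel₀ _ hdm, add_neg_cancel]
  refine chainLexLt_of_isGreatest ⟨?_, fun i hi => hm.2 fun hdi => hi ?_⟩ hcancel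
  · rw [Set.mem_ofPred_eq, hcancel]
    exact Ne.symm hzm
  · rw [Pi.add_apply, Pi.smul_apply, hdi, smul_zero, add_zero]

end Chains

theorem stmt15_general {𝕜 : Type} [Field 𝕜] {l : ℕ} (C : BasedChainComplex 𝕜 l)
    (z c : Fin l → 𝕜)
    (hmin : C.LexMinimal z) (hhom : ∃ e : Fin l → 𝕜, c - z = C.D.mulVec e)
    (hle : chainLexLe c z) : c = z := by
  by_contra hne
  obtain ⟨e, he⟩ := hhom
  obtain ⟨m, hm⟩ := exists_isGreatest_ne_zero (sub_ne_zero.2 hne)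
  by_cases hzm : z m = 0
  · have hcz : IsGreatest {i | c i ≠ z i} m := by
      simpa only [Pi.sub_apply, sub_ne_zero] using hm
    exact (chainLexLe_iff_of_isGreatest hcz (Or.inr hzm)).1 hle hzm
  · apply hmin ((-z m / (c - z) m) • e)
    rw [Matrix.mulVec_smul, ← he]
    exact chainLexLt_add_smul hm hzm

/-- In an elementwise-filtered based chain complex over a field, every homology class has
a unique lexicographically minimal representative cycle: if `z` is lexicographically
minimal and `c` is a homologous cycle with `c ⊑ z`, then `c = z`. -/
theorem stmt15 {𝕜 : Type} [Field 𝕜] {l : ℕ} (C : BasedChainComplex 𝕜 l)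
    (n : ℕ) (z c : Fin l → 𝕜) (hz : C.IsCycle n z) (hc : C.IsCycle n c)
    (hmin : C.LexMinimal z) (hhom : ∃ e : Fin l → 𝕜, c - z = C.D.mulVec e)
    (hle : chainLexLe c z) : c = z :=
  stmt15_general C z c hmin hhom hle
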